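/- arXiv:2311.03154 — 4 statements merged into one kernel-verified Lean document; each statement's English description precedes it below -/
import Mathlib

section
/- Let h : ℝ^d → ℝ be differentiable, L-smooth and μ-strongly convex with 0 ≤ μ ≤ L. Then for all x, y, z ∈ ℝ^d: ⟨∇h(x), z − y⟩ ≥ h(z) − h(y) + (μ/4)·‖y − z‖² − L·‖z − x‖². -/
/-!
Split `⟪∇h x, z - y⟫ = ⟪∇h x, z - x⟫ - ⟪∇h x, y - x⟫`. The first term is bounded below by the
descent lemma `h z ≤ h x + ⟪∇h x, z - x⟫ + (L/2)‖z - x‖²`, the second above by the first-order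
characterisation of strong convexity `h y ≥ h x + ⟪∇h x, y - x⟫ + (μ/2)‖y - x‖²`. The cost of
passing through `x` is paid by `‖y - z‖² ≤ 2‖y - x‖² + 2‖z - x‖²` and `μ ≤ L`.
-/

open Set AffineMap
open scoped RealInnerProductSpace

section ConvexFirstOrder

variable {F : Type*} [NormedAddCommGroup F] [NormedSpace ℝ F]

theorem ConvexOn.add_le_of_hasFDerivAt {f : F → ℝ} {f' : F →L[ℝ] ℝ} {a : F}
    (hf : ConvexOn ℝ univ f) (hd : HasFDerivAt f f' a) (b : F) :
    f a + f' (b - a) ≤ f b := by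
  set ℓ : ℝ →ᵃ[ℝ] F := lineMap a b
  have hline : ConvexOn ℝ univ (f ∘ ℓ) := by
    simpa using hf.comp_affineMap ℓ
  have hderiv : HasDerivAt (f ∘ ℓ) (f' (b - a)) 0 :=
    (by simpa [ℓ] using hd : HasFDerivAt f f' (ℓ 0)).comp_hasDerivAt 0 hasDerivAt_lineMap
  have hslope := hline.le_slope_of_hasDerivAt (mem_univ 0) (mem_univ 1) one_pos hderiv
  rw [slope_def_field] at hslope
  simp only [ℓ, Function.comp_apply, lineMap_apply_zero, lineMap_apply_one, sub_zero,
    div_one] at hslope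
  linarith

end ConvexFirstOrder

section InnerProduct

variable {E : Type*} [NormedAddCommGroup E] [InnerProductSpace ℝ E]

theorem add_le_of_convexOn_sub_sq_of_hasFDerivAt {f : E → ℝ} {f' : E →L[ℝ] ℝ} {μ : ℝ} {a : E}
    (hf : ConvexOn ℝ univ fun x => f x - μ / 2 * ‖x‖ ^ 2) (hd : HasFDerivAt f f' a) (b : E) :
    f a + f' (b - a) + μ / 2 * ‖b - a‖ ^ 2 ≤ f b := by
  have hfirst := hf.add_le_of_hasFDerivAt
    (hd.sub ((hasStrictFDerivAt_norm_sq a).hasFDerivAt.const_mul (μ / 2))) b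
  simp only [sub_apply, smul_apply, coe_innerSL_apply, nsmul_eq_mul, Nat.cast_ofNat,
    smul_eq_mul, inner_sub_right, real_inner_self_eq_norm_sq] at hfirst
  rw [norm_sub_sq_real, real_inner_comm]
  linarith

variable [CompleteSpace E]

theorem le_add_inner_gradient_add_sq_of_lipschitz {f : E → ℝ} {L : ℝ} (hf : Differentiable ℝ f)
    (hgrad : ∀ x y, ‖gradient f x - gradient f y‖ ≤ L * ‖x - y‖) (x z : E) :
    f z ≤ f x + ⟪gradient f x, z - x⟫ + L / 2 * ‖z - x‖ ^ 2 := by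
  set u := z - x
  set ψ : ℝ → ℝ := fun t => f (lineMap x z t) - t * ⟪gradient f x, u⟫ - L * ‖u‖ ^ 2 * t ^ 2 / 2
  have hψ' : ∀ t : ℝ,
      HasDerivAt ψ (⟪gradient f (lineMap x z t) - gradient f x, u⟫ - L * ‖u‖ ^ 2 * t) t := by
    intro t
    have hline : HasDerivAt (f ∘ lineMap x z) ⟪gradient f (lineMap x z t), u⟫ t := by
      rw [inner_gradient_left]
      exact (hf _).hasFDerivAt.comp_hasDerivAt t hasDerivAt_lineMap
    exact ((hline.sub ((hasDerivAt_id t).mul_const _)).sub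
      (((hasDerivAt_pow 2 t).const_mul (L * ‖u‖ ^ 2)).div_const 2)).congr_deriv
      (by rw [inner_sub_left]; push_cast; ring)
  have hψ'_nonpos : ∀ t ∈ interior (Icc (0 : ℝ) 1),
      ⟪gradient f (lineMap x z t) - gradient f x, u⟫ - L * ‖u‖ ^ 2 * t ≤ 0 := by
    intro t ht
    rw [interior_Icc] at ht
    have hdisp : lineMap x z t - x = t • u := lineMap_vsub_left x z t
    calc ⟪gradient f (lineMap x z t) - gradient f x, u⟫ - L * ‖u‖ ^ 2 * t
        ≤ L * ‖lineMap x z t - x‖ * ‖u‖ - L * ‖u‖ ^ 2 * t := by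
          gcongr
          exact (real_inner_le_norm _ _).trans
            (mul_le_mul_of_nonneg_right (hgrad _ _) (norm_nonneg u))
      _ = 0 := by rw [hdisp, norm_smul, Real.norm_of_nonneg ht.1.le]; ring
  have hψ_anti := antitoneOn_of_hasDerivWithinAt_nonpos (convex_Icc 0 1)
    (fun t _ => (hψ' t).continuousAt.continuousWithinAt) (fun t _ => (hψ' t).hasDerivWithinAt)
    hψ'_nonpos (left_mem_Icc.2 zero_le_one) (right_mem_Icc.2 zero_le_one) zero_le_one
  simp only [ψ, lineMap_apply_zero, lineMap_apply_one] at hψ_anti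
  linarith

end InnerProduct

theorem perturbed_strong_convexity_general
    {d : ℕ} (h : EuclideanSpace ℝ (Fin d) → ℝ)
    {L μ : ℝ} (hμ0 : 0 ≤ μ) (hμL : μ ≤ L)
    (hdiff : Differentiable ℝ h)
    (hsmooth : ∀ x y, ‖gradient h x - gradient h y‖ ≤ L * ‖x - y‖)
    (hsc : ConvexOn ℝ Set.univ (fun x => h x - μ / 2 * ‖x‖ ^ 2))
    (x y z : EuclideanSpace ℝ (Fin d)) :
    ⟪gradient h x, z - y⟫ ≥ h z - h y + μ / 4 * ‖y - z‖ ^ 2 - L * ‖z - x‖ ^ 2 := by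
  have hlower := add_le_of_convexOn_sub_sq_of_hasFDerivAt hsc (hdiff x).hasFDerivAt y
  rw [← inner_gradient_left] at hlower
  have hupper := le_add_inner_gradient_add_sq_of_lipschitz hdiff hsmooth x z
  have hsplit : ⟪gradient h x, z - y⟫ = ⟪gradient h x, z - x⟫ - ⟪gradient h x, y - x⟫ := by
    rw [← inner_sub_right, sub_sub_sub_cancel_right]
  have hdist : ‖y - z‖ ^ 2 ≤ 2 * (‖y - x‖ ^ 2 + ‖z - x‖ ^ 2) := by
    calc ‖y - z‖ ^ 2 ≤ (‖y - x‖ + ‖z - x‖) ^ 2 := by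
          gcongr; simpa only [norm_sub_rev x z] using norm_sub_le_norm_sub_add_norm_sub y x z
      _ ≤ _ := add_sq_le
  have hμ : μ / 4 * ‖y - z‖ ^ 2 ≤ μ / 4 * (2 * (‖y - x‖ ^ 2 + ‖z - x‖ ^ 2)) :=
    mul_le_mul_of_nonneg_left hdist (by positivity)
  linarith [mul_le_mul_of_nonneg_right hμL (sq_nonneg ‖z - x‖)]

/-- Lemma: for a differentiable, `L`-smooth and `μ`-strongly convex function `h` on `ℝ^d`
(with `0 ≤ μ ≤ L`), one has `⟨∇h(x), z − y⟩ ≥ h(z) − h(y) + (μ/4)‖y − z‖² − L‖z − x‖²`. -/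
theorem perturbed_strong_convexity
    {d : ℕ} (h : EuclideanSpace ℝ (Fin d) → ℝ)
    {L μ : ℝ} (hL : 0 < L) (hμ0 : 0 ≤ μ) (hμL : μ ≤ L)
    (hdiff : Differentiable ℝ h)
    (hsmooth : ∀ x y, ‖gradient h x - gradient h y‖ ≤ L * ‖x - y‖)
    (hsc : ConvexOn ℝ Set.univ (fun x => h x - μ / 2 * ‖x‖ ^ 2))
    (x y z : EuclideanSpace ℝ (Fin d)) :
    ⟪gradient h x, z - y⟫ ≥ h z - h y + μ / 4 * ‖y - z‖ ^ 2 - L * ‖z - x‖ ^ 2 :=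
  perturbed_strong_convexity_general h hμ0 hμL hdiff hsmooth hsc x y z
end

section
/- Let M ≥ 2, 1 ≤ S ≤ M and K ≥ 1 be integers, and let x_1,…,x_M ∈ ℝ^d be vectors with mean x̄ = (1/M)·Σ_{i=1}^M x_i and variance ζ² = (1/M)·Σ_{i=1}^M ‖x_i − x̄‖². If π is a permutation of {1,…,M} chosen uniformly at random, then Σ_{m=1}^S Σ_{k=0}^{K−1} E[‖K·Σ_{i=1}^{m−1}(x_{π(i)} − x̄) + k·(x_{π(m)} − x̄)‖²] ≤ (1/2)·S²·K³·ζ². -/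
/-!
Write `c i = x i - x̄`, so that `∑ c = 0`. Each summand is `‖∑ j, w j • c (π j)‖²` for a
nonnegative weight vector `w` (`K` on the first `m` positions, `k` on the next one). Expanding the
square, the diagonal terms average to `ζ² ∑ w²`, while every off-diagonal correlation
`E ⟪c (π i), c (π j)⟫` is nonpositive: it does not depend on `j ≠ i` (compose `π` with a
transposition fixing `i`), and its sum over `j ≠ i` is `-E ‖c (π i)‖²` because the `c`s sum to zero.
So the `(m, k)` summand is at most `(m K² + k²) ζ²`, and summing these gives `½ S² K³ ζ²`.
-/

open Finset RealInnerProductSpace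
open scoped Nat

namespace Equiv.Perm

variable {ι β : Type*} [Fintype ι] [DecidableEq ι]

theorem sum_apply_eq_sum_apply [AddCommMonoid β] (g : ι → β) (i j : ι) :
    ∑ π : Perm ι, g (π i) = ∑ π : Perm ι, g (π j) :=
  calc ∑ π : Perm ι, g (π i) = ∑ π : Perm ι, g ((π * swap i j) j) := by
        simp only [mul_apply, swap_apply_right]
    _ = ∑ π : Perm ι, g (π j) := Equiv.sum_comp (Equiv.mulRight (swap i j)) (fun π => g (π j))

theorem card_nsmul_sum_apply [AddCommMonoid β] (g : ι → β) (i : ι) :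
    Fintype.card ι • ∑ π : Perm ι, g (π i) = (Fintype.card ι)! • ∑ a, g a :=
  calc Fintype.card ι • ∑ π : Perm ι, g (π i) = ∑ j : ι, ∑ π : Perm ι, g (π j) := by
        rw [← card_univ, ← sum_const]
        exact sum_congr rfl fun j _ => sum_apply_eq_sum_apply g i j
    _ = ∑ _π : Perm ι, ∑ a, g a := by
        rw [sum_comm]
        exact sum_congr rfl fun π _ => Equiv.sum_comp π g
    _ = (Fintype.card ι)! • ∑ a, g a := by
        rw [sum_const, card_univ, Fintype.card_perm]

theorem inv_factorial_mul_sum_apply (g : ι → ℝ) (i : ι) :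
    ((Fintype.card ι)! : ℝ)⁻¹ * ∑ π : Perm ι, g (π i) = (Fintype.card ι : ℝ)⁻¹ * ∑ a, g a := by
  have hcard : (Fintype.card ι : ℝ) ≠ 0 :=
    Nat.cast_ne_zero.mpr (Fintype.card_pos_iff.mpr ⟨i⟩).ne'
  have h := card_nsmul_sum_apply g i
  rw [nsmul_eq_mul, nsmul_eq_mul] at h
  field_simp
  linarith

variable {E : Type*} [NormedAddCommGroup E] [InnerProductSpace ℝ E]

theorem sum_inner_apply_nonpos {c : ι → E} (hc : ∑ a, c a = 0) {i j : ι} (hij : i ≠ j) :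
    ∑ π : Perm ι, ⟪c (π i), c (π j)⟫ ≤ 0 := by
  set T := ∑ π : Perm ι, ⟪c (π i), c (π j)⟫
  have hswap : ∀ k ∈ univ.erase i, ∑ π : Perm ι, ⟪c (π i), c (π k)⟫ = T := fun k hk =>
    calc ∑ π : Perm ι, ⟪c (π i), c (π k)⟫
        = ∑ π : Perm ι, ⟪c ((π * swap j k) i), c ((π * swap j k) j)⟫ := by
          simp only [mul_apply, swap_apply_left,
            swap_apply_of_ne_of_ne hij (ne_of_mem_erase hk).symm]
      _ = T := Equiv.sum_comp (Equiv.mulRight (swap j k)) (fun π => ⟪c (π i), c (π j)⟫)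
  have hrest : ∀ π : Perm ι, ∑ k ∈ univ.erase i, c (π k) = -c (π i) := fun π => by
    rw [eq_neg_iff_add_eq_zero, sum_erase_add _ _ (mem_univ i), Equiv.sum_comp π c, hc]
  have hsum : ((Fintype.card ι - 1 : ℕ) : ℝ) * T = -∑ π : Perm ι, ‖c (π i)‖ ^ 2 :=
    calc ((Fintype.card ι - 1 : ℕ) : ℝ) * T
        = ∑ k ∈ univ.erase i, ∑ π : Perm ι, ⟪c (π i), c (π k)⟫ := by
          rw [sum_congr rfl hswap, sum_const, card_erase_of_mem (mem_univ i), card_univ,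
            nsmul_eq_mul]
      _ = ∑ π : Perm ι, ⟪c (π i), ∑ k ∈ univ.erase i, c (π k)⟫ := by
          rw [sum_comm]
          exact sum_congr rfl fun π _ => (inner_sum _ _ _).symm
      _ = -∑ π : Perm ι, ‖c (π i)‖ ^ 2 := by
          simp only [hrest, inner_neg_right, real_inner_self_eq_norm_sq, sum_neg_distrib]
  have hcard : (0 : ℝ) < ((Fintype.card ι - 1 : ℕ) : ℝ) := by
    have := Fintype.one_lt_card_iff_nontrivial.mpr ⟨i, j, hij⟩
    exact_mod_cast Nat.sub_pos_of_lt this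
  refine nonpos_of_mul_nonpos_right ?_ hcard
  rw [hsum, neg_nonpos]
  positivity

theorem sum_norm_sq_sum_smul_apply_le {c : ι → E} (hc : ∑ a, c a = 0) {w : ι → ℝ}
    (hw : ∀ j, 0 ≤ w j) :
    ∑ π : Perm ι, ‖∑ j, w j • c (π j)‖ ^ 2 ≤ ∑ i, w i ^ 2 * ∑ π : Perm ι, ‖c (π i)‖ ^ 2 := by
  have hexpand : ∀ π : Perm ι,
      ‖∑ j, w j • c (π j)‖ ^ 2 = ∑ i, ∑ j, w i * w j * ⟪c (π i), c (π j)⟫ := fun π => by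
    rw [← real_inner_self_eq_norm_sq, sum_inner]
    refine sum_congr rfl fun i _ => ?_
    rw [inner_sum]
    refine sum_congr rfl fun j _ => ?_
    rw [real_inner_smul_left, real_inner_smul_right, mul_assoc]
  calc ∑ π : Perm ι, ‖∑ j, w j • c (π j)‖ ^ 2
      = ∑ i, ∑ j, w i * w j * ∑ π : Perm ι, ⟪c (π i), c (π j)⟫ := by
        simp only [hexpand, mul_sum]
        rw [sum_comm]
        exact sum_congr rfl fun i _ => sum_comm
    _ ≤ ∑ i, w i * w i * ∑ π : Perm ι, ⟪c (π i), c (π i)⟫ := by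
        refine sum_le_sum fun i _ => ?_
        rw [← add_sum_erase _ _ (mem_univ i)]
        refine add_le_of_nonpos_right (sum_nonpos fun j hj => ?_)
        exact mul_nonpos_of_nonneg_of_nonpos (mul_nonneg (hw i) (hw j))
          (sum_inner_apply_nonpos hc (ne_of_mem_erase hj).symm)
    _ = ∑ i, w i ^ 2 * ∑ π : Perm ι, ‖c (π i)‖ ^ 2 := by
        simp only [real_inner_self_eq_norm_sq, sq]

theorem inv_factorial_mul_sum_norm_sq_sum_smul_apply_le {c : ι → E} (hc : ∑ a, c a = 0)
    {w : ι → ℝ} (hw : ∀ j, 0 ≤ w j) :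
    ((Fintype.card ι)! : ℝ)⁻¹ * ∑ π : Perm ι, ‖∑ j, w j • c (π j)‖ ^ 2 ≤
      (∑ j, w j ^ 2) * ((Fintype.card ι : ℝ)⁻¹ * ∑ a, ‖c a‖ ^ 2) := by
  calc ((Fintype.card ι)! : ℝ)⁻¹ * ∑ π : Perm ι, ‖∑ j, w j • c (π j)‖ ^ 2
      ≤ ((Fintype.card ι)! : ℝ)⁻¹ * ∑ i, w i ^ 2 * ∑ π : Perm ι, ‖c (π i)‖ ^ 2 := by
        gcongr
        exact sum_norm_sq_sum_smul_apply_le hc hw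
    _ = (∑ j, w j ^ 2) * ((Fintype.card ι : ℝ)⁻¹ * ∑ a, ‖c a‖ ^ 2) := by
        rw [mul_sum, sum_mul]
        refine sum_congr rfl fun i _ => ?_
        rw [← inv_factorial_mul_sum_apply (fun a => ‖c a‖ ^ 2) i]
        ring

end Equiv.Perm

theorem sum_sub_inv_card_smul_sum {ι E : Type*} [Fintype ι] [AddCommGroup E] [Module ℝ E]
    (x : ι → E) : ∑ i, (x i - (Fintype.card ι : ℝ)⁻¹ • ∑ j, x j) = 0 := by
  rcases isEmpty_or_nonempty ι with hι | hι
  · exact sum_of_isEmpty _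
  rw [sum_sub_distrib, sum_const, card_univ, ← Nat.cast_smul_eq_nsmul ℝ, smul_smul,
    mul_inv_cancel₀ (Nat.cast_ne_zero.mpr Fintype.card_ne_zero), one_smul, sub_self]

section PrefixWeight

variable {R : Type*} [Semiring R] {n t : ℕ}

def prefixWeight (t : ℕ) (j₀ : Fin n) (a b : R) (j : Fin n) : R :=
  (if (j : ℕ) < t then a else 0) + if j = j₀ then b else 0

theorem prefixWeight_nonneg [PartialOrder R] [IsOrderedRing R] (j₀ : Fin n) {a b : R}
    (ha : 0 ≤ a) (hb : 0 ≤ b) (j : Fin n) : 0 ≤ prefixWeight t j₀ a b j := by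
  unfold prefixWeight
  split_ifs <;> simp [ha, hb, add_nonneg]

theorem sum_prefixWeight_smul {M : Type*} [AddCommMonoid M] [Module R M] (h : t ≤ n)
    (j₀ : Fin n) (a b : R) (v : Fin n → M) :
    ∑ j, prefixWeight t j₀ a b j • v j = a • ∑ i : Fin t, v (Fin.castLE h i) + b • v j₀ := by
  simp only [prefixWeight, add_smul, ite_smul, zero_smul, sum_add_distrib, sum_ite_eq',
    mem_univ, if_true, smul_sum]
  congr 1
  exact (Fintype.sum_of_injective (Fin.castLE h) (Fin.castLE_injective h)
    (fun i => a • v (Fin.castLE h i)) (fun j => if (j : ℕ) < t then a • v j else 0)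
    (fun j hj => if_neg fun hjt => hj ⟨⟨j, hjt⟩, rfl⟩) (fun i => (if_pos i.2).symm)).symm

theorem sum_prefixWeight_sq {j₀ : Fin n} (hj₀ : (j₀ : ℕ) = t) (a b : R) :
    ∑ j, prefixWeight t j₀ a b j ^ 2 = t * a ^ 2 + b ^ 2 := by
  have hsq : ∀ j, prefixWeight t j₀ a b j ^ 2 = prefixWeight t j₀ (a ^ 2) (b ^ 2) j • 1 := by
    intro j
    unfold prefixWeight
    split_ifs with hjt hj <;> simp_all
  rw [sum_congr rfl fun j _ => hsq j, sum_prefixWeight_smul (hj₀ ▸ j₀.isLt).le]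
  simp [Nat.cast_comm]

end PrefixWeight

theorem two_mul_sum_range_sq_le (K : ℕ) : 2 * ∑ k ∈ range K, k ^ 2 ≤ K ^ 3 := by
  induction K with
  | zero => simp
  | succ K ih =>
    rw [sum_range_succ, mul_add, show (K + 1) ^ 3 = K ^ 3 + 3 * K ^ 2 + 3 * K + 1 by ring]
    omega

theorem two_mul_sum_range_sum_range_le (S K : ℕ) :
    2 * ∑ m ∈ range S, ∑ k ∈ range K, (m * K ^ 2 + k ^ 2) ≤ S ^ 2 * K ^ 3 := by
  induction S with
  | zero => simp
  | succ S ih =>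
    rw [sum_range_succ, sum_add_distrib, sum_const, card_range, smul_eq_mul]
    nlinarith [two_mul_sum_range_sq_le K]

theorem inv_factorial_mul_sum_norm_sq_smul_sum_castLE_add_smul_le
    {E : Type*} [NormedAddCommGroup E] [InnerProductSpace ℝ E] {n t : ℕ} {c : Fin n → E}
    (hc : ∑ i, c i = 0) (h : t ≤ n) {j₀ : Fin n} (hj₀ : (j₀ : ℕ) = t) {a b : ℝ}
    (ha : 0 ≤ a) (hb : 0 ≤ b) :
    (n ! : ℝ)⁻¹ * ∑ π : Equiv.Perm (Fin n),
        ‖a • ∑ i : Fin t, c (π (Fin.castLE h i)) + b • c (π j₀)‖ ^ 2 ≤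
      (t * a ^ 2 + b ^ 2) * ((n : ℝ)⁻¹ * ∑ i, ‖c i‖ ^ 2) := by
  have := Equiv.Perm.inv_factorial_mul_sum_norm_sq_sum_smul_apply_le hc
    (prefixWeight_nonneg (t := t) j₀ ha hb)
  simpa only [Fintype.card_fin, sum_prefixWeight_smul h, sum_prefixWeight_sq hj₀] using this

theorem sfl_sampling_lemma_general
    {d M : ℕ} {S K : ℕ} (hSM : S ≤ M)
    (x : Fin M → EuclideanSpace ℝ (Fin d))
    (xbar : EuclideanSpace ℝ (Fin d)) (hxbar : xbar = (M : ℝ)⁻¹ • ∑ i : Fin M, x i)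
    (ζ : ℝ) (hζ : ζ ^ 2 = (M : ℝ)⁻¹ * ∑ i : Fin M, ‖x i - xbar‖ ^ 2) :
    ∑ m : Fin S, ∑ k ∈ Finset.range K,
        ((Nat.factorial M : ℝ))⁻¹ *
          ∑ π : Equiv.Perm (Fin M),
            ‖(K : ℝ) • (∑ i : Fin m.1, (x (π (Fin.castLE (m.2.le.trans hSM) i)) - xbar))
              + (k : ℝ) • (x (π (Fin.castLE hSM m)) - xbar)‖ ^ 2 ≤
      1 / 2 * S ^ 2 * K ^ 3 * ζ ^ 2 := by
  have hc : ∑ i, (x i - xbar) = 0 := by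
    simpa only [hxbar, Fintype.card_fin] using sum_sub_inv_card_smul_sum x
  have hweights : ∑ m ∈ range S, ∑ k ∈ range K, ((m : ℝ) * K ^ 2 + k ^ 2) ≤
      1 / 2 * S ^ 2 * K ^ 3 := by
    have := two_mul_sum_range_sum_range_le S K
    rw [← Nat.cast_le (α := ℝ)] at this
    push_cast at this
    linarith
  calc _ ≤ ∑ m : Fin S, ∑ k ∈ range K, ((m : ℕ) * (K : ℝ) ^ 2 + (k : ℝ) ^ 2) * ζ ^ 2 :=
        sum_le_sum fun m _ => sum_le_sum fun k _ => by
          rw [hζ]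
          exact inv_factorial_mul_sum_norm_sq_smul_sum_castLE_add_smul_le
            (c := fun i => x i - xbar) hc (m.2.le.trans hSM) (j₀ := Fin.castLE hSM m) rfl
            (by positivity) (by positivity)
    _ = (∑ m ∈ range S, ∑ k ∈ range K, ((m : ℝ) * K ^ 2 + k ^ 2)) * ζ ^ 2 := by
        rw [Fin.sum_univ_eq_sum_range (fun m => ∑ k ∈ range K, ((m : ℝ) * K ^ 2 + k ^ 2) * ζ ^ 2)]
        simp only [sum_mul]
    _ ≤ 1 / 2 * S ^ 2 * K ^ 3 * ζ ^ 2 := mul_le_mul_of_nonneg_right hweights (sq_nonneg ζ)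

/-- Technical sampling lemma for SFL: for a uniformly random permutation `π` of `{1, …, M}`,
`Σ_{m=1}^{S} Σ_{k=0}^{K−1} E‖K Σ_{i<m−1} (x_{π i} − x̄) + k (x_{π (m−1)} − x̄)‖² ≤ ½ S² K³ ζ²`,
where `x̄` and `ζ²` are the population mean and variance (clients are `0`-indexed, and the
expectation over the uniform distribution on permutations is written as the average over
all permutations). -/
theorem sfl_sampling_lemma
    {d M : ℕ} (hM : 2 ≤ M) {S K : ℕ} (hS1 : 1 ≤ S) (hSM : S ≤ M) (hK : 1 ≤ K)
    (x : Fin M → EuclideanSpace ℝ (Fin d))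
    (xbar : EuclideanSpace ℝ (Fin d)) (hxbar : xbar = (M : ℝ)⁻¹ • ∑ i : Fin M, x i)
    (ζ : ℝ) (hζ : ζ ^ 2 = (M : ℝ)⁻¹ * ∑ i : Fin M, ‖x i - xbar‖ ^ 2) :
    ∑ m : Fin S, ∑ k ∈ Finset.range K,
        ((Nat.factorial M : ℝ))⁻¹ *
          ∑ π : Equiv.Perm (Fin M),
            ‖(K : ℝ) • (∑ i : Fin m.1, (x (π (Fin.castLE (m.2.le.trans hSM) i)) - xbar))
              + (k : ℝ) • (x (π (Fin.castLE hSM m)) - xbar)‖ ^ 2 ≤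
      1 / 2 * S ^ 2 * K ^ 3 * ζ ^ 2 :=
  sfl_sampling_lemma_general hSM x xbar hxbar ζ hζ
end

section
/- Let T ≥ 0 be an integer, let {r_t}_{t=0}^{T+1} and {s_t}_{t=0}^{T} be nonnegative real sequences, and let b > 0, c ≥ 0 and 0 < a ≤ d be reals. Suppose γ is a constant with 0 < γ ≤ 1/d and aγ < 1, that T + 1 ≥ 1/(2aγ), and that r_{t+1} ≤ (1 − aγ)·r_t − bγ·s_t + cγ² for all 0 ≤ t ≤ T. Then, setting w_t = (1 − aγ)^{−(t+1)} and W_T = Σ_{t=0}^T w_t, one has (b/W_T)·Σ_{t=0}^T w_t·s_t ≤ 3a·r_0·(1 − aγ)^{T+1} + cγ ≤ 3a·r_0·exp(−aγ(T+1)) + cγ. -/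
/-!
Multiplying the recursion at step `t` by `w t = ρ^{-(t+1)}`, where `ρ = 1 - aγ`, makes the terms
`ρ^{-t} r t` telescope, so `bγ Σ w t s t ≤ r 0 + cγ² W_T`. The weights form a geometric series
with `aγ ρ^{T+1} W_T = 1 - ρ^{T+1}`, and `ρ^{T+1} ≤ exp(-aγ(T+1)) ≤ exp(-1/2) < 2/3` by the choice
of `T`, hence `r 0 ≤ 3aγ ρ^{T+1} W_T r 0`; dividing by `γ W_T` gives the claim.
-/

open Finset Real

lemma mul_sum_inv_pow_mul_le_of_le_mul_sub {ρ β e : ℝ} (hρ : 0 < ρ) {T : ℕ} {r s : ℕ → ℝ}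
    (hrT : 0 ≤ r (T + 1)) (hrec : ∀ t, t ≤ T → r (t + 1) ≤ ρ * r t - β * s t + e) :
    β * ∑ t ∈ range (T + 1), (ρ ^ (t + 1))⁻¹ * s t ≤
      r 0 + e * ∑ t ∈ range (T + 1), (ρ ^ (t + 1))⁻¹ := by
  have hstep : ∀ t ∈ range (T + 1), β * ((ρ ^ (t + 1))⁻¹ * s t) ≤
      ((ρ ^ t)⁻¹ * r t - (ρ ^ (t + 1))⁻¹ * r (t + 1)) + e * (ρ ^ (t + 1))⁻¹ := by
    intro t ht
    have hρt : 0 < ρ ^ t := pow_pos hρ t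
    have h := mul_le_mul_of_nonneg_left (hrec t (Nat.lt_succ_iff.mp (mem_range.mp ht)))
      (inv_nonneg.mpr (pow_pos hρ (t + 1)).le)
    have hinv : (ρ ^ (t + 1))⁻¹ * ρ = (ρ ^ t)⁻¹ := by
      rw [pow_succ]; field_simp
    linear_combination h + r t * hinv
  have hlast : 0 ≤ (ρ ^ (T + 1))⁻¹ * r (T + 1) :=
    mul_nonneg (inv_nonneg.mpr (pow_pos hρ _).le) hrT
  have hsum := sum_le_sum hstep
  rw [sum_add_distrib, sum_range_sub' (fun t ↦ (ρ ^ t)⁻¹ * r t), ← mul_sum, ← mul_sum] at hsum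
  simp only [pow_zero, inv_one, one_mul] at hsum
  linarith

lemma one_sub_mul_pow_mul_sum_inv_pow {ρ : ℝ} (hρ : ρ ≠ 0) (n : ℕ) :
    (1 - ρ) * (ρ ^ n * ∑ t ∈ range n, (ρ ^ (t + 1))⁻¹) = 1 - ρ ^ n := by
  induction n with
  | zero => simp
  | succ n ih =>
    have hρn : ρ ^ (n + 1) ≠ 0 := pow_ne_zero _ hρ
    rw [sum_range_succ, mul_add, mul_inv_cancel₀ hρn, pow_succ]
    linear_combination ρ * ih

lemma one_sub_pow_le_exp_neg_mul {x : ℝ} (hx : x ≤ 1) (n : ℕ) :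
    (1 - x) ^ n ≤ exp (-(x * n)) := by
  calc (1 - x) ^ n ≤ exp (-x) ^ n := pow_le_pow_left₀ (by linarith) (one_sub_le_exp_neg x) n
    _ = exp (-(x * n)) := by rw [← exp_nat_mul]; ring_nf

lemma exp_neg_le_two_thirds {y : ℝ} (hy : 1 / 2 ≤ y) : exp (-y) ≤ 2 / 3 := by
  rw [exp_neg, inv_le_comm₀ (exp_pos y) (by norm_num)]
  linarith [add_one_le_exp y]

theorem tuning_linear_rate_general
    {T : ℕ} (r s : ℕ → ℝ)
    (hr : ∀ t, t ≤ T + 1 → 0 ≤ r t)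
    {a b c γ : ℝ} (ha : 0 < a)
    (hγ0 : 0 < γ) (haγ : a * γ < 1)
    (hT : (1 : ℝ) / (2 * (a * γ)) ≤ (T : ℝ) + 1)
    (hrec : ∀ t, t ≤ T → r (t + 1) ≤ (1 - a * γ) * r t - b * γ * s t + c * γ ^ 2)
    (w : ℕ → ℝ) (hw : ∀ t, w t = ((1 - a * γ) ^ (t + 1))⁻¹) :
    b / (∑ t ∈ Finset.range (T + 1), w t) *
        ∑ t ∈ Finset.range (T + 1), w t * s t ≤
      3 * a * r 0 * (1 - a * γ) ^ (T + 1) + c * γ ∧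
    3 * a * r 0 * (1 - a * γ) ^ (T + 1) + c * γ ≤
      3 * a * r 0 * Real.exp (-(a * γ * ((T : ℝ) + 1))) + c * γ := by
  have haγ0 : 0 < a * γ := mul_pos ha hγ0
  have hr0 : 0 ≤ r 0 := hr 0 (Nat.zero_le _)
  simp only [hw]
  set ρ := 1 - a * γ with hρ
  set W := ∑ t ∈ range (T + 1), (ρ ^ (t + 1))⁻¹
  have hW : 0 < W := sum_pos (fun t _ ↦ inv_pos.mpr (pow_pos (by linarith) _)) ⟨0, by simp⟩
  have htelescope : b * γ * ∑ t ∈ range (T + 1), (ρ ^ (t + 1))⁻¹ * s t ≤ r 0 + c * γ ^ 2 * W :=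
    mul_sum_inv_pow_mul_le_of_le_mul_sub (by linarith) (hr _ le_rfl) hrec
  have hgeom : a * γ * (ρ ^ (T + 1) * W) = 1 - ρ ^ (T + 1) := by
    simpa [hρ] using one_sub_mul_pow_mul_sum_inv_pow (ρ := ρ) (by linarith) (T + 1)
  have hexp : ρ ^ (T + 1) ≤ exp (-(a * γ * ((T : ℝ) + 1))) := by
    simpa using one_sub_pow_le_exp_neg_mul haγ.le (T + 1)
  have hhalf : 1 / 2 ≤ a * γ * ((T : ℝ) + 1) := by
    rw [div_le_iff₀ (by positivity)] at hT; linarith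
  have hsmall : ρ ^ (T + 1) ≤ 2 / 3 := hexp.trans (exp_neg_le_two_thirds hhalf)
  have hr0_le : r 0 ≤ 3 * a * γ * ρ ^ (T + 1) * W * r 0 := by nlinarith
  refine ⟨?_, by gcongr⟩
  rw [div_mul_eq_mul_div, div_le_iff₀ hW, ← mul_le_mul_iff_right₀ hγ0]
  linear_combination htelescope + hr0_le

/-- Linear-convergence learning-rate tuning lemma: if `r_{t+1} ≤ (1 − aγ) r_t − bγ s_t + cγ²`
for all `0 ≤ t ≤ T`, with `0 < γ ≤ 1/d`, `aγ < 1`, `0 < a ≤ d` and `T + 1 ≥ 1/(2aγ)`, then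
for the weights `w_t = (1 − aγ)^{−(t+1)}`,
`(b/W_T) Σ_{t=0}^T w_t s_t ≤ 3 a r_0 (1 − aγ)^{T+1} + cγ ≤ 3 a r_0 exp(−aγ(T+1)) + cγ`. -/
theorem tuning_linear_rate
    {T : ℕ} (r s : ℕ → ℝ)
    (hr : ∀ t, t ≤ T + 1 → 0 ≤ r t) (hs : ∀ t, t ≤ T → 0 ≤ s t)
    {a b c d γ : ℝ} (hb : 0 < b) (hc : 0 ≤ c) (ha : 0 < a) (had : a ≤ d)
    (hγ0 : 0 < γ) (hγd : γ ≤ 1 / d) (haγ : a * γ < 1)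
    (hT : (1 : ℝ) / (2 * (a * γ)) ≤ (T : ℝ) + 1)
    (hrec : ∀ t, t ≤ T → r (t + 1) ≤ (1 - a * γ) * r t - b * γ * s t + c * γ ^ 2)
    (w : ℕ → ℝ) (hw : ∀ t, w t = ((1 - a * γ) ^ (t + 1))⁻¹) :
    b / (∑ t ∈ Finset.range (T + 1), w t) *
        ∑ t ∈ Finset.range (T + 1), w t * s t ≤
      3 * a * r 0 * (1 - a * γ) ^ (T + 1) + c * γ ∧
    3 * a * r 0 * (1 - a * γ) ^ (T + 1) + c * γ ≤
      3 * a * r 0 * Real.exp (-(a * γ * ((T : ℝ) + 1))) + c * γ :=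
  tuning_linear_rate_general r s hr ha hγ0 haγ hT hrec w hw
end

section
/- Let T ≥ 0 be an integer, let {r_t}_{t=0}^{T+1} and {s_t}_{t=0}^{T} be nonnegative real sequences, and let b > 0, c₁ > 0, c₂ > 0, d > 0 and r_0 > 0 be reals. Set γ = min{ (r_0/(c₁(T+1)))^{1/2}, (r_0/(c₂(T+1)))^{1/3}, 1/d }. If r_{t+1} ≤ r_t − bγ·s_t + c₁γ² + c₂γ³ for all 0 ≤ t ≤ T, then (b/(T+1))·Σ_{t=0}^T s_t ≤ 2·(c₁·r_0/(T+1))^{1/2} + 2·c₂^{1/3}·(r_0/(T+1))^{2/3} + d·r_0/(T+1). -/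
/-!
Summing the recursion telescopes to `b γ Σ s_t ≤ r₀ + (T+1)(c₁γ² + c₂γ³)` (as `r_{T+1} ≥ 0`), so
the average is at most `u / γ + c₁ γ + c₂ γ²` with `u = r₀ / (T+1)`. As `γ` is the minimum of
`A = (u/c₁)^{1/2}`, `B = (u/c₂)^{1/3}` and `1/d`, we have `γ ≤ A`, `γ ≤ B` and
`1/γ ≤ 1/A + 1/B + d`; each candidate then balances `u / γ` against one term:
`u/A + c₁A = 2 (c₁u)^{1/2}`, `u/B + c₂B² = 2 c₂^{1/3} u^{2/3}`, and the cap contributes `d u`.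
-/

open Finset

lemma mul_sum_le_sub_add_of_le_sub_add {K : Type*} [Field K] [LinearOrder K]
    [IsStrictOrderedRing K] {r s : ℕ → K} {a e : K} {n : ℕ}
    (h : ∀ t < n, r (t + 1) ≤ r t - a * s t + e) :
    a * ∑ t ∈ range n, s t ≤ r 0 - r n + n * e :=
  calc a * ∑ t ∈ range n, s t = ∑ t ∈ range n, a * s t := mul_sum _ _ _
    _ ≤ ∑ t ∈ range n, (r t - r (t + 1) + e) :=
      sum_le_sum fun t ht ↦ by linarith [h t (mem_range.1 ht)]
    _ = r 0 - r n + n * e := by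
      rw [sum_add_distrib, sum_range_sub', sum_const, card_range, nsmul_eq_mul]

lemma one_div_min_le_one_div_add_one_div {K : Type*} [Field K] [LinearOrder K]
    [IsStrictOrderedRing K] {x y : K} (hx : 0 < x) (hy : 0 < y) :
    1 / min x y ≤ 1 / x + 1 / y := by
  rcases min_choice x y with h | h <;> rw [h] <;> linarith [one_div_pos.2 hx, one_div_pos.2 hy]

lemma mul_div_rpow_eq {c u : ℝ} (p : ℝ) (hc : 0 < c) (hu : 0 ≤ u) :
    c * (u / c) ^ p = c ^ (1 - p) * u ^ p := by
  rw [Real.div_rpow hu hc.le, Real.rpow_sub hc, Real.rpow_one]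
  ring

lemma div_div_rpow_eq {c u : ℝ} (p : ℝ) (hc : 0 < c) (hu : 0 < u) :
    u / (u / c) ^ p = c ^ p * u ^ (1 - p) := by
  rw [Real.div_rpow hu.le hc.le, Real.rpow_sub hu, Real.rpow_one]
  field_simp

lemma div_add_mul_add_mul_sq_le_of_eq_min {u c₁ c₂ d γ : ℝ} (hu : 0 < u) (hc₁ : 0 < c₁)
    (hc₂ : 0 < c₂) (hd : 0 < d)
    (hγ : γ = min ((u / c₁) ^ ((1 : ℝ) / 2)) (min ((u / c₂) ^ ((1 : ℝ) / 3)) (1 / d))) :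
    u / γ + c₁ * γ + c₂ * γ ^ 2 ≤
      2 * (c₁ * u) ^ ((1 : ℝ) / 2) + 2 * c₂ ^ ((1 : ℝ) / 3) * u ^ ((2 : ℝ) / 3) + d * u := by
  set A := (u / c₁) ^ ((1 : ℝ) / 2)
  set B := (u / c₂) ^ ((1 : ℝ) / 3)
  have hA : 0 < A := by positivity
  have hB : 0 < B := by positivity
  have hγA : γ ≤ A := hγ ▸ min_le_left _ _
  have hγB : γ ≤ B := hγ ▸ (min_le_right _ _).trans (min_le_left _ _)
  have hγ0 : 0 < γ := hγ ▸ lt_min hA (lt_min hB (by positivity))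
  have hinv : 1 / γ ≤ 1 / A + 1 / B + d := by
    have := one_div_min_le_one_div_add_one_div hB (one_div_pos.2 hd)
    rw [one_div_one_div] at this
    linarith [hγ ▸ one_div_min_le_one_div_add_one_div hA (lt_min hB (one_div_pos.2 hd))]
  have hsqrt : c₁ * A + u / A = 2 * (c₁ * u) ^ ((1 : ℝ) / 2) := by
    rw [mul_div_rpow_eq _ hc₁ hu.le, div_div_rpow_eq _ hc₁ hu, Real.mul_rpow hc₁.le hu.le]
    norm_num
    ring
  have hcbrt : c₂ * B ^ 2 + u / B = 2 * c₂ ^ ((1 : ℝ) / 3) * u ^ ((2 : ℝ) / 3) := by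
    rw [← Real.rpow_natCast, ← Real.rpow_mul (by positivity), mul_div_rpow_eq _ hc₂ hu.le,
      div_div_rpow_eq _ hc₂ hu]
    norm_num
    ring
  calc u / γ + c₁ * γ + c₂ * γ ^ 2 ≤ u * (1 / A + 1 / B + d) + c₁ * A + c₂ * B ^ 2 := by
        rw [div_eq_mul_one_div u γ]
        gcongr
    _ = (c₁ * A + u / A) + (c₂ * B ^ 2 + u / B) + d * u := by ring
    _ = _ := by rw [hsqrt, hcbrt]

theorem tuning_sublinear_rate_general
    {T : ℕ} (r s : ℕ → ℝ)
    (hr : ∀ t, t ≤ T + 1 → 0 ≤ r t)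
    {b c₁ c₂ d γ : ℝ} (hc₁ : 0 < c₁) (hc₂ : 0 < c₂) (hd : 0 < d)
    (hr0 : 0 < r 0)
    (hγ : γ = min ((r 0 / (c₁ * ((T : ℝ) + 1))) ^ ((1 : ℝ) / 2))
      (min ((r 0 / (c₂ * ((T : ℝ) + 1))) ^ ((1 : ℝ) / 3)) (1 / d)))
    (hrec : ∀ t, t ≤ T → r (t + 1) ≤ r t - b * γ * s t + c₁ * γ ^ 2 + c₂ * γ ^ 3) :
    b / ((T : ℝ) + 1) * ∑ t ∈ Finset.range (T + 1), s t ≤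
      2 * (c₁ * r 0 / ((T : ℝ) + 1)) ^ ((1 : ℝ) / 2)
      + 2 * c₂ ^ ((1 : ℝ) / 3) * (r 0 / ((T : ℝ) + 1)) ^ ((2 : ℝ) / 3)
      + d * r 0 / ((T : ℝ) + 1) := by
  set N : ℝ := (T : ℝ) + 1
  have hN : 0 < N := by positivity
  rw [div_mul_eq_div_div_swap, div_mul_eq_div_div_swap] at hγ
  have hγ0 : 0 < γ := hγ ▸ lt_min (by positivity) (lt_min (by positivity) (by positivity))
  have htotal : b * γ * ∑ t ∈ range (T + 1), s t ≤ r 0 + N * (c₁ * γ ^ 2 + c₂ * γ ^ 3) := by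
    have := mul_sum_le_sub_add_of_le_sub_add (r := r) (s := s) (n := T + 1) (a := b * γ)
      (e := c₁ * γ ^ 2 + c₂ * γ ^ 3) fun t ht ↦ by linarith [hrec t (Nat.lt_succ_iff.1 ht)]
    push_cast at this
    linarith [hr (T + 1) le_rfl]
  have havg : b / N * ∑ t ∈ range (T + 1), s t ≤ r 0 / N / γ + c₁ * γ + c₂ * γ ^ 2 := by
    calc b / N * ∑ t ∈ range (T + 1), s t = b * γ * (∑ t ∈ range (T + 1), s t) / (N * γ) := by
          field_simp
      _ ≤ (r 0 + N * (c₁ * γ ^ 2 + c₂ * γ ^ 3)) / (N * γ) := by gcongr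
      _ = r 0 / N / γ + c₁ * γ + c₂ * γ ^ 2 := by field_simp; ring
  calc _ ≤ _ := havg
    _ ≤ _ := div_add_mul_add_mul_sq_le_of_eq_min (by positivity) hc₁ hc₂ hd hγ
    _ = _ := by rw [mul_div_assoc, mul_div_assoc]

/-- Sublinear learning-rate tuning lemma: if `r_{t+1} ≤ r_t − bγ s_t + c₁γ² + c₂γ³` for
all `0 ≤ t ≤ T` with the tuned learning rate
`γ = min{(r₀/(c₁(T+1)))^{1/2}, (r₀/(c₂(T+1)))^{1/3}, 1/d}`, then
`(b/(T+1)) Σ_{t=0}^T s_t ≤ 2 (c₁ r₀/(T+1))^{1/2} + 2 c₂^{1/3} (r₀/(T+1))^{2/3} + d r₀/(T+1)`. -/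
theorem tuning_sublinear_rate
    {T : ℕ} (r s : ℕ → ℝ)
    (hr : ∀ t, t ≤ T + 1 → 0 ≤ r t) (hs : ∀ t, t ≤ T → 0 ≤ s t)
    {b c₁ c₂ d γ : ℝ} (hb : 0 < b) (hc₁ : 0 < c₁) (hc₂ : 0 < c₂) (hd : 0 < d)
    (hr0 : 0 < r 0)
    (hγ : γ = min ((r 0 / (c₁ * ((T : ℝ) + 1))) ^ ((1 : ℝ) / 2))
      (min ((r 0 / (c₂ * ((T : ℝ) + 1))) ^ ((1 : ℝ) / 3)) (1 / d)))
    (hrec : ∀ t, t ≤ T → r (t + 1) ≤ r t - b * γ * s t + c₁ * γ ^ 2 + c₂ * γ ^ 3) :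
    b / ((T : ℝ) + 1) * ∑ t ∈ Finset.range (T + 1), s t ≤
      2 * (c₁ * r 0 / ((T : ℝ) + 1)) ^ ((1 : ℝ) / 2)
      + 2 * c₂ ^ ((1 : ℝ) / 3) * (r 0 / ((T : ℝ) + 1)) ^ ((2 : ℝ) / 3)
      + d * r 0 / ((T : ℝ) + 1) :=
  tuning_sublinear_rate_general r s hr hc₁ hc₂ hd hr0 hγ hrec
end
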